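/- arXiv:2206.09035 — 2 statements merged into one kernel-verified Lean document; each statement's English description precedes it below -/
import Mathlib

section
/- (Key step in the proof of the paper's Lemma 'countable, 0'.) Assume the Krull dimension of D is at least 1. Then no nonzero K-vector space is countably generated as a D-module; in particular, the fraction field K itself is not countably generated as a D-module. -/
/-!
A nonzero nonunit `t` of `D` is transcendental over `ℂ`, so the fractions `1 / (t - c)`,
`c ∈ ℂ`, are `ℂ`-linearly independent in `K`, and `K` has uncountable `ℂ`-dimension. On the
other hand, `D` is spanned over `ℂ` by the countably many images of monomials, so a countable
`D`-generating set of `K` would give a countable `ℂ`-spanning set. A nonzero `K`-vector space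
surjects `K`-linearly onto `K`, so it cannot be countably generated over `D` either.
-/

universe v

open Submodule Cardinal Pointwise

def Module.CountablyGenerated (R M : Type*) [Semiring R] [AddCommMonoid M] [Module R M] :
    Prop :=
  ∃ S : Set M, S.Countable ∧ span R S = ⊤

namespace Module.CountablyGenerated

variable {R M N : Type*} [Semiring R] [AddCommMonoid M] [Module R M] [AddCommMonoid N]
  [Module R N]

theorem of_basis {ι : Type*} [Countable ι] (b : Basis ι R M) : CountablyGenerated R M :=
  ⟨Set.range b, Set.countable_range b, b.span_eq⟩

theorem of_surjective (h : CountablyGenerated R M) {f : M →ₗ[R] N}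
    (hf : Function.Surjective f) : CountablyGenerated R N := by
  obtain ⟨S, hS, hspan⟩ := h
  refine ⟨f '' S, hS.image f, ?_⟩
  rw [span_image, hspan, Submodule.map_top, LinearMap.range_eq_top.mpr hf]

theorem rank_le_aleph0 [StrongRankCondition R] (h : CountablyGenerated R M) :
    Module.rank R M ≤ ℵ₀ := by
  obtain ⟨S, hS, hspan⟩ := h
  calc Module.rank R M = Module.rank R (span R S) := by rw [hspan, rank_top]
    _ ≤ #S := rank_span_le S
    _ ≤ ℵ₀ := mk_le_aleph0_iff.mpr hS.to_subtype

end Module.CountablyGenerated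

theorem Module.CountablyGenerated.trans {R A M : Type*} [CommSemiring R] [Semiring A]
    [Algebra R A] [AddCommMonoid M] [Module R M] [Module A M] [IsScalarTower R A M]
    (hA : CountablyGenerated R A) (hM : CountablyGenerated A M) : CountablyGenerated R M := by
  obtain ⟨T, hT, hTspan⟩ := hA
  obtain ⟨S, hS, hSspan⟩ := hM
  refine ⟨T • S, ?_, ?_⟩
  · rw [← Set.image2_smul]
    exact hT.image2 hS _
  · rw [span_smul_of_span_eq_top hTspan, hSspan, restrictScalars_top]

theorem Algebra.FiniteType.countablyGenerated (R A : Type*) [CommSemiring R] [CommSemiring A]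
    [Algebra R A] [Algebra.FiniteType R A] : Module.CountablyGenerated R A := by
  obtain ⟨n, f, hf⟩ := Algebra.FiniteType.iff_quotient_mvPolynomial''.mp ‹_›
  exact (Module.CountablyGenerated.of_basis (MvPolynomial.basisMonomials (Fin n) R)).of_surjective
    (f := f.toLinearMap) hf

theorem transcendental_of_not_isUnit {F A : Type*} [Field F] [Ring A] [IsDomain A] [Algebra F A]
    {t : A} (h0 : t ≠ 0) (hu : ¬IsUnit t) : Transcendental F t :=
  fun ht => hu (ht.isIntegral.isUnit h0)

theorem Module.exists_dual_surjective (K V : Type*) [Field K] [AddCommGroup V] [Module K V]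
    [Nontrivial V] : ∃ φ : Module.Dual K V, Function.Surjective φ := by
  obtain ⟨w, hw⟩ := exists_ne (0 : V)
  obtain ⟨φ, hφ⟩ := Module.Projective.exists_dual_ne_zero K hw
  refine ⟨φ, fun x => ⟨(x / φ w) • w, ?_⟩⟩
  rw [map_smul, smul_eq_mul, div_mul_cancel₀ x hφ]

theorem FractionRing.not_countablyGenerated (F : Type*) {D : Type*} [Field F] [Uncountable F]
    [CommRing D] [IsDomain D] [Algebra F D] (hD : Module.CountablyGenerated F D)
    (hnf : ¬IsField D) : ¬Module.CountablyGenerated D (FractionRing D) := by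
  intro hK
  obtain ⟨t, ht0, htu⟩ := Ring.exists_not_isUnit_of_not_isField hnf
  have htr : Transcendental F (algebraMap D (FractionRing D) t) :=
    (transcendental_algebraMap_iff (IsFractionRing.injective D _)).mpr
      (transcendental_of_not_isUnit ht0 htu)
  have hcard : #F ≤ ℵ₀ := lift_le_aleph0.mp <|
    htr.linearIndependent_sub_inv.cardinal_lift_le_rank.trans
      (lift_le_aleph0.mpr (hD.trans hK).rank_le_aleph0)
  exact not_countable (mk_le_aleph0_iff.mp hcard)

theorem statement2 (D : Type) [CommRing D] [IsDomain D] [Algebra ℂ D]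
    (hft : Algebra.FiniteType ℂ D)
    (hdim : 1 ≤ ringKrullDim D) :
    (∀ (V : Type v) [AddCommGroup V] [Module (FractionRing D) V] [Module D V]
        [IsScalarTower D (FractionRing D) V], Nontrivial V →
      ¬ ∃ S : Set V, S.Countable ∧ Submodule.span D S = ⊤) ∧
    ¬ ∃ S : Set (FractionRing D), S.Countable ∧ Submodule.span D S = ⊤ := by
  have hnf : ¬IsField D := fun h => by
    rw [ringKrullDim_eq_zero_of_isField h] at hdim
    norm_num at hdim
  have : Uncountable ℂ := Complex.ofReal_injective.uncountable
  have hK :=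
    FractionRing.not_countablyGenerated ℂ (Algebra.FiniteType.countablyGenerated ℂ D) hnf
  refine ⟨fun V _ _ _ _ _ hgen => ?_, hK⟩
  obtain ⟨φ, hφ⟩ := Module.exists_dual_surjective (FractionRing D) V
  exact hK (Module.CountablyGenerated.of_surjective hgen (f := φ.restrictScalars D) hφ)
end

section
/- (Key algebraic step in the proof of the paper's main theorem for adjoint groups, combining Proposition 'A_G commutative' with the Pittie–Steinberg theorem to conclude 𝒜_G ≅ ℂ[T^∨ ⫽ W].) Suppose that for some integer n ≥ 1 there is an isomorphism of A-modules between B^⊕n and A^⊕n. Then the structure ring homomorphism A → B is bijective; in particular B is isomorphic to A as an A-algebra. -/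
/-!
`B` is a direct summand of `B^n ≅ A^n`, hence a finite flat `A`-module, and comparing ranks at
the stalks of the isomorphism gives `n * rank_p B = n` at every prime `p`, so `B` has constant
rank one. A finite flat algebra of constant rank one is isomorphic to its base ring.
-/

namespace Module

variable {R : Type*} [CommRing R]

lemma Flat.of_pi {ι : Type*} (M : ι → Type*) [∀ i, AddCommGroup (M i)] [∀ i, Module R (M i)]
    [Flat R (Π i, M i)] (i : ι) : Flat R (M i) := by
  classical
  exact .of_retract (LinearMap.single R M i) (LinearMap.proj i)
    (LinearMap.proj_comp_single_same R M i)

lemma rankAtStalk_eq_one_of_pi_linearEquiv_pi {M : Type*} [AddCommGroup M] [Module R M]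
    [Flat R M] [Module.Finite R M] {ι : Type*} [Fintype ι] [Nonempty ι]
    (e : (ι → M) ≃ₗ[R] (ι → R)) : rankAtStalk (R := R) M = 1 := by
  ext p
  have := p.nontrivial
  have h := congrFun (rankAtStalk_eq_of_equiv e) p
  simp only [rankAtStalk_pi, finsum_eq_sum_of_fintype, Finset.sum_const, rankAtStalk_self,
    Pi.one_apply, smul_eq_mul] at h ⊢
  exact Nat.eq_of_mul_eq_mul_left Finset.univ_nonempty.card_pos h

end Module

theorem statement7 (A : Type*) (B : Type*) [CommRing A] [CommRing B] [Algebra A B]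
    (n : ℕ) (hn : 1 ≤ n)
    (h : Nonempty ((Fin n → B) ≃ₗ[A] (Fin n → A))) :
    Function.Bijective (algebraMap A B) ∧ Nonempty (B ≃ₐ[A] A) := by
  obtain ⟨e⟩ := h
  let i₀ : Fin n := ⟨0, hn⟩
  have : Nonempty (Fin n) := ⟨i₀⟩
  have : Module.Finite A (Fin n → B) := .equiv e.symm
  have : Module.Flat A (Fin n → B) := .of_linearEquiv e
  have : Module.Finite A B := .of_pi (fun _ : Fin n ↦ B) i₀
  have : Module.Flat A B := .of_pi (fun _ : Fin n ↦ B) i₀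
  have hbij := Module.algebraMap_bijective_of_rankAtStalk
    (Module.rankAtStalk_eq_one_of_pi_linearEquiv_pi e)
  exact ⟨hbij, ⟨(AlgEquiv.ofBijective (Algebra.ofId A B) hbij).symm⟩⟩
end
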